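/- arXiv:2407.00812 — 6 statements merged into one kernel-verified Lean document; each statement's English description precedes it below -/
import Mathlib

section
/- Let φ : ℝⁿ → ℝ be continuously differentiable and bounded from below, let a, b > 0, let (x^k) satisfy the sufficient-decrease condition (H1) and the modified relative-error condition (H3), let x̄ be an accumulation point of (x^k), and suppose φ satisfies the exponent PLK condition at x̄ with exponent q ∈ (1/2, 1) and some constant M > 0. Then there exist σ > 0 and K ∈ ℕ such that ‖x^k − x̄‖ ≤ σ · k^{−(1−q)/(2q−1)} for all k ≥ K. -/
open Filter Topology

/-!
Along the iterates the gap `r k = φ (x k) - φ x̄` is antitone, and nonnegative because a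
subsequence converges to `x̄`. Near `x̄`, the PLK inequality together with (H3) gives
`r k ^ q ≤ κ ‖x (k + 1) - x k‖` with `κ = M (1 - q) b`, which combined with (H1) yields
(i) `r (k + 1) ≤ r k - c r k ^ (2q)` and, by concavity of `t ↦ t ^ (1 - q)`,
(ii) `‖x (k + 1) - x k‖ ≤ C (r k ^ (1 - q) - r (k + 1) ^ (1 - q))`.
Starting the sequence close enough to `x̄` along the subsequence, (ii) keeps all later iterates in
the PLK neighbourhood and telescopes to `‖x k - x̄‖ ≤ C r k ^ (1 - q)`. By convexity of
`t ↦ t ^ (1 - 2q)`, (i) makes `r k ^ (1 - 2q)` grow at least linearly in `k`, so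
`r k ^ (1 - q) = O(k ^ (-(1 - q) / (2q - 1)))`.
-/

lemma rpow_le_rpow_add_mul_sub {p x y : ℝ} (hp0 : 0 ≤ p) (hp1 : p ≤ 1) (hx : 0 < x)
    (hy : 0 ≤ y) : y ^ p ≤ x ^ p + p * x ^ (p - 1) * (y - x) := by
  have bernoulli := rpow_one_add_le_one_add_mul_self
    (show -1 ≤ y / x - 1 by linarith [div_nonneg hy hx.le]) hp0 hp1
  rw [add_sub_cancel, Real.div_rpow hy hx.le, div_le_iff₀ (by positivity)] at bernoulli
  rw [Real.rpow_sub_one hx.ne']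
  calc y ^ p ≤ (1 + p * (y / x - 1)) * x ^ p := bernoulli
    _ = x ^ p + p * (x ^ p / x) * (y - x) := by field_simp

lemma rpow_neg_add_mul_sub_le {α s t : ℝ} (hα0 : 0 ≤ α) (hα1 : α ≤ 1) (ht : 0 < t)
    (hts : t ≤ s) : s ^ (-α) + α * s ^ (-α - 1) * (s - t) ≤ t ^ (-α) := by
  have hs : 0 < s := ht.trans_le hts
  set z := α * (s - t) / s
  have hz : 0 ≤ z := by positivity
  have tangent : t ^ α ≤ s ^ α * (1 - z) := by
    have := rpow_le_rpow_add_mul_sub hα0 hα1 hs ht.le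
    rw [Real.rpow_sub_one hs.ne'] at this
    calc t ^ α ≤ s ^ α + α * (s ^ α / s) * (t - s) := this
      _ = s ^ α * (1 - z) := by simp only [z]; field_simp; ring
  have key : t ^ α * (1 + z) ≤ s ^ α := by
    have hsα : 0 < s ^ α := by positivity
    nlinarith [mul_le_mul_of_nonneg_right tangent (by linarith : (0 : ℝ) ≤ 1 + z),
      mul_nonneg hsα.le (sq_nonneg z)]
  rw [Real.rpow_sub_one hs.ne', Real.rpow_neg hs.le, Real.rpow_neg ht.le,
    le_inv_comm₀ (by positivity) (by positivity)]
  calc t ^ α ≤ s ^ α / (1 + z) := by rw [le_div_iff₀ (by positivity)]; exact key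
    _ = ((s ^ α)⁻¹ + α * ((s ^ α)⁻¹ / s) * (s - t))⁻¹ := by
      simp only [z]; field_simp

lemma rpow_neg_add_le_of_le_sub_mul_rpow {p c s t : ℝ} (hp1 : 1 ≤ p) (hp2 : p ≤ 2)
    (hc : 0 ≤ c) (hs : 0 ≤ s) (ht : 0 < t) (h : t ≤ s - c * s ^ p) :
    s ^ (-(p - 1)) + c * (p - 1) ≤ t ^ (-(p - 1)) := by
  have hcs : 0 ≤ c * s ^ p := by positivity
  have tangent := rpow_neg_add_mul_sub_le (α := p - 1) (s := s) (by linarith) (by linarith) ht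
    (by linarith)
  have hinv : s ^ (-(p - 1) - 1) * s ^ p = 1 := by
    rw [← Real.rpow_add (by linarith)]; norm_num
  calc s ^ (-(p - 1)) + c * (p - 1)
      = s ^ (-(p - 1)) + (p - 1) * s ^ (-(p - 1) - 1) * (c * s ^ p) := by
        linear_combination (-(p - 1) * c) * hinv
    _ ≤ s ^ (-(p - 1)) + (p - 1) * s ^ (-(p - 1) - 1) * (s - t) := by
        gcongr
        linarith
    _ ≤ t ^ (-(p - 1)) := tangent

lemma mul_sub_le_rpow_neg_of_le_sub_mul_rpow {r : ℕ → ℝ} {p c : ℝ} {K : ℕ} (hp1 : 1 ≤ p)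
    (hp2 : p ≤ 2) (hc : 0 ≤ c) (hr : ∀ k, 0 ≤ r k)
    (hrec : ∀ k ≥ K, r (k + 1) ≤ r k - c * r k ^ p) :
    ∀ k ≥ K, 0 < r k → c * (p - 1) * (k - K) ≤ r k ^ (-(p - 1)) := by
  intro k hk
  induction k, hk using Nat.le_induction with
  | base => intro _; simpa using Real.rpow_nonneg (hr K) _
  | succ k hk ih =>
    intro hpos
    have hdecay : r (k + 1) ≤ r k - c * r k ^ p := hrec k hk
    have hk_pos : 0 < r k := by
      have : 0 ≤ c * r k ^ p := mul_nonneg hc (Real.rpow_nonneg (hr k) p)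
      linarith
    have hstep := rpow_neg_add_le_of_le_sub_mul_rpow hp1 hp2 hc (hr k) hpos hdecay
    push_cast
    linarith [ih hk_pos]

lemma rpow_le_rpow_neg_div_of_le_rpow_neg {r A α β : ℝ} (hr : 0 ≤ r) (hA : 0 < A) (hα : 0 < α)
    (hβ : 0 ≤ β) (h : A ≤ r ^ (-α)) : r ^ β ≤ A ^ (-(β / α)) := by
  calc r ^ β = (r ^ (-α)) ^ (-(β / α)) := by
        rw [← Real.rpow_mul hr]; congr 1; field_simp
    _ ≤ A ^ (-(β / α)) :=
        Real.rpow_le_rpow_of_nonpos hA h (neg_nonpos.mpr (by positivity))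

lemma exists_rpow_le_mul_rpow_neg_of_le_sub_mul_rpow {r : ℕ → ℝ} {p c β : ℝ} {K : ℕ}
    (hp1 : 1 < p) (hp2 : p ≤ 2) (hc : 0 < c) (hβ : 0 < β) (hr : ∀ k, 0 ≤ r k)
    (hrec : ∀ k ≥ K, r (k + 1) ≤ r k - c * r k ^ p) :
    ∃ D > 0, ∀ k ≥ 2 * K + 1, r k ^ β ≤ D * (k : ℝ) ^ (-(β / (p - 1))) := by
  have hα : 0 < p - 1 := by linarith
  have hA : 0 < c * (p - 1) / 2 := by positivity
  refine ⟨(c * (p - 1) / 2) ^ (-(β / (p - 1))), Real.rpow_pos_of_pos hA _, fun k hk => ?_⟩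
  have hk' : (2 * K + 1 : ℝ) ≤ k := by exact_mod_cast hk
  rcases (hr k).eq_or_lt with hzero | hpos
  · rw [← hzero, Real.zero_rpow hβ.ne']
    positivity
  have growth := mul_sub_le_rpow_neg_of_le_sub_mul_rpow hp1.le hp2 hc.le hr hrec k
    (by omega) hpos
  have hle : c * (p - 1) / 2 * k ≤ r k ^ (-(p - 1)) := by
    refine le_trans ?_ growth
    have : (0 : ℝ) ≤ c * (p - 1) := by positivity
    nlinarith
  calc r k ^ β ≤ (c * (p - 1) / 2 * k) ^ (-(β / (p - 1))) :=
        rpow_le_rpow_neg_div_of_le_rpow_neg (hr k) (mul_pos hA (by linarith)) hα hβ.le hle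
    _ = (c * (p - 1) / 2) ^ (-(β / (p - 1))) * (k : ℝ) ^ (-(β / (p - 1))) :=
        Real.mul_rpow (by positivity) (Nat.cast_nonneg k)

section Descent

variable {a κ q r r' Δ : ℝ}

lemma le_sub_mul_rpow_of_rpow_le_mul (ha : 0 ≤ a) (hκ : 0 < κ) (hr : 0 ≤ r)
    (hdec : a * Δ ^ 2 ≤ r - r') (hgrad : r ^ q ≤ κ * Δ) :
    r' ≤ r - a / κ ^ 2 * r ^ (2 * q) := by
  have hsq : r ^ (2 * q) ≤ (κ * Δ) ^ 2 := by
    rw [mul_comm, Real.rpow_mul hr, Real.rpow_two]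
    exact pow_le_pow_left₀ (Real.rpow_nonneg hr q) hgrad 2
  calc r' ≤ r - a * Δ ^ 2 := by linarith
    _ = r - a / κ ^ 2 * (κ * Δ) ^ 2 := by field_simp
    _ ≤ r - a / κ ^ 2 * r ^ (2 * q) := by gcongr

lemma le_mul_sub_rpow_of_rpow_le_mul (hq0 : 0 < q) (hq1 : q < 1) (ha : 0 < a) (hκ : 0 < κ)
    (hr' : 0 ≤ r') (hΔ : 0 ≤ Δ) (hdec : a * Δ ^ 2 ≤ r - r') (hgrad : r ^ q ≤ κ * Δ) :
    Δ ≤ κ / (a * (1 - q)) * (r ^ (1 - q) - r' ^ (1 - q)) := by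
  have h1q : 0 < 1 - q := by linarith
  rcases hΔ.eq_or_lt with rfl | hpos
  · have : r' ^ (1 - q) ≤ r ^ (1 - q) := Real.rpow_le_rpow hr' (by linarith) h1q.le
    exact mul_nonneg (by positivity) (by linarith)
  have hr : 0 < r := by nlinarith [mul_pos ha (pow_pos hpos 2)]
  have tangent := rpow_le_rpow_add_mul_sub h1q.le (by linarith) hr hr'
  have hrq : r ^ (1 - q - 1) * r ^ q = 1 := by
    rw [← Real.rpow_add hr]; norm_num
  have key : a * (1 - q) * Δ * Δ ≤ κ * (r ^ (1 - q) - r' ^ (1 - q)) * Δ := by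
    calc a * (1 - q) * Δ * Δ ≤ (1 - q) * (r - r') := by nlinarith
      _ = (1 - q) * r ^ (1 - q - 1) * (r - r') * r ^ q := by
          linear_combination (-(1 - q) * (r - r')) * hrq
      _ ≤ (r ^ (1 - q) - r' ^ (1 - q)) * (κ * Δ) := by
          have : 0 ≤ (1 - q) * r ^ (1 - q - 1) * (r - r') := by
            have : 0 ≤ r - r' := by nlinarith
            positivity
          gcongr <;> linarith
      _ = κ * (r ^ (1 - q) - r' ^ (1 - q)) * Δ := by ring
  rw [div_mul_eq_mul_div, le_div_iff₀ (by positivity)]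
  linarith [le_of_mul_le_mul_right key hpos]

end Descent

section Localization

variable {E : Type*} [PseudoMetricSpace E] {x : ℕ → E} {u : ℕ → ℝ} {K : ℕ}

lemma dist_lt_of_dist_succ_le {c : E} {ε : ℝ} (hu : ∀ k, 0 ≤ u k)
    (hK : dist (x K) c + u K < ε)
    (hstep : ∀ k ≥ K, dist (x k) c < ε → dist (x (k + 1)) (x k) ≤ u k - u (k + 1)) :
    ∀ k ≥ K, dist (x k) c < ε := by
  suffices h : ∀ k ≥ K, dist (x k) c + u k < ε from
    fun k hk => by linarith [h k hk, hu k]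
  intro k hk
  induction k, hk using Nat.le_induction with
  | base => exact hK
  | succ k hk ih =>
    have hball : dist (x k) c < ε := by linarith [hu k]
    linarith [dist_triangle (x (k + 1)) (x k) c, hstep k hk hball]

lemma dist_le_sub_of_dist_succ_le
    (hstep : ∀ k ≥ K, dist (x (k + 1)) (x k) ≤ u k - u (k + 1)) {k m : ℕ} (hk : K ≤ k)
    (hkm : k ≤ m) : dist (x m) (x k) ≤ u k - u m := by
  induction m, hkm using Nat.le_induction with
  | base => simp
  | succ m hm ih =>
    linarith [dist_triangle (x (m + 1)) (x m) (x k), hstep m (hk.trans hm)]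

lemma dist_le_of_dist_succ_le_of_tendsto {c : E} {σ : ℕ → ℕ} (hu : ∀ k, 0 ≤ u k)
    (hstep : ∀ k ≥ K, dist (x (k + 1)) (x k) ≤ u k - u (k + 1)) (hσ : StrictMono σ)
    (hlim : Tendsto (fun j => x (σ j)) atTop (𝓝 c)) {k : ℕ} (hk : K ≤ k) :
    dist (x k) c ≤ u k := by
  rw [dist_comm]
  refine le_of_tendsto (hlim.dist tendsto_const_nhds) ?_
  filter_upwards [hσ.tendsto_atTop.eventually_ge_atTop k] with j hj
  linarith [dist_le_sub_of_dist_succ_le hstep hk hj, hu (σ j)]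

end Localization

lemma Antitone.le_of_tendsto_comp_strictMono {α : Type*} [Preorder α] [TopologicalSpace α]
    [ClosedIicTopology α] {f : ℕ → α} {σ : ℕ → ℕ} {L : α} (hf : Antitone f)
    (hσ : StrictMono σ) (hlim : Tendsto (fun j => f (σ j)) atTop (𝓝 L)) (k : ℕ) : L ≤ f k :=
  _root_.le_of_tendsto hlim <| by
    filter_upwards [hσ.tendsto_atTop.eventually_ge_atTop k] with j hj using hf hj

lemma antitone_of_mul_sq_le_sub {r d : ℕ → ℝ} {a : ℝ} (ha : 0 ≤ a)
    (hdec : ∀ k, a * d k ^ 2 ≤ r k - r (k + 1)) : Antitone r :=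
  antitone_nat_of_succ_le fun k => by nlinarith [hdec k, sq_nonneg (d k)]

lemma exists_dist_le_mul_rpow_of_descent {E : Type*} [PseudoMetricSpace E] {x : ℕ → E}
    {c : E} {r : ℕ → ℝ} {σ : ℕ → ℕ} {a κ q ε η : ℝ} (hq0 : 0 < q) (hq1 : q < 1) (ha : 0 < a)
    (hκ : 0 < κ) (hε : 0 < ε) (hη : 0 < η) (hσ : StrictMono σ)
    (hx : Tendsto (fun j => x (σ j)) atTop (𝓝 c)) (hrσ : Tendsto (fun j => r (σ j)) atTop (𝓝 0))
    (hr : ∀ k, 0 ≤ r k)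
    (hdec : ∀ k, a * dist (x (k + 1)) (x k) ^ 2 ≤ r k - r (k + 1))
    (hgrad : ∀ k, dist (x k) c < ε → 0 < r k → r k < η →
      r k ^ q ≤ κ * dist (x (k + 1)) (x k)) :
    ∃ K, ∀ k ≥ K, dist (x k) c ≤ κ / (a * (1 - q)) * r k ^ (1 - q) ∧
      r (k + 1) ≤ r k - a / κ ^ 2 * r k ^ (2 * q) := by
  have h1q : 0 < 1 - q := by linarith
  set C := κ / (a * (1 - q))
  have hr_anti := antitone_of_mul_sq_le_sub ha.le hdec
  obtain ⟨K, hK_dist, hK_η⟩ : ∃ K, dist (x K) c + C * r K ^ (1 - q) < ε ∧ r K < η := by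
    have hu : Tendsto (fun j => dist (x (σ j)) c + C * r (σ j) ^ (1 - q)) atTop (𝓝 0) := by
      simpa [Real.zero_rpow h1q.ne'] using
        (hx.dist (tendsto_const_nhds (x := c))).add
          ((hrσ.rpow_const (Or.inr h1q.le)).const_mul C)
    obtain ⟨j, hj⟩ := ((hu.eventually_lt_const hε).and (hrσ.eventually_lt_const hη)).exists
    exact ⟨σ j, hj⟩
  have hgradK : ∀ k ≥ K, dist (x k) c < ε → r k ^ q ≤ κ * dist (x (k + 1)) (x k) := by
    intro k hk hball
    rcases (hr k).eq_or_lt with hzero | hpos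
    · rw [← hzero, Real.zero_rpow hq0.ne']; positivity
    · exact hgrad k hball hpos ((hr_anti hk).trans_lt hK_η)
  have hstep : ∀ k ≥ K, dist (x k) c < ε →
      dist (x (k + 1)) (x k) ≤ C * r k ^ (1 - q) - C * r (k + 1) ^ (1 - q) := by
    intro k hk hball
    rw [← mul_sub]
    exact le_mul_sub_rpow_of_rpow_le_mul hq0 hq1 ha hκ (hr _) dist_nonneg (hdec k)
      (hgradK k hk hball)
  have hu : ∀ k, 0 ≤ C * r k ^ (1 - q) := fun k => by have := hr k; positivity
  have hball := dist_lt_of_dist_succ_le hu hK_dist hstep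
  refine ⟨K, fun k hk => ⟨?_, ?_⟩⟩
  · exact dist_le_of_dist_succ_le_of_tendsto hu (fun k hk => hstep k hk (hball k hk)) hσ hx hk
  · exact le_sub_mul_rpow_of_rpow_le_mul ha.le hκ (hr k) (hdec k) (hgradK k hk (hball k hk))

theorem iterate_sublinear_high_exponent_H3_general
    (n : ℕ) (φ : EuclideanSpace ℝ (Fin n) → ℝ)
    (hφ : ContDiff ℝ 1 φ)
    (a b : ℝ) (ha : 0 < a) (hb : 0 < b)
    (x : ℕ → EuclideanSpace ℝ (Fin n))
    (hH1 : ∀ k : ℕ, φ (x (k + 1)) + a * ‖x (k + 1) - x k‖ ^ 2 ≤ φ (x k))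
    (hH3 : ∀ k : ℕ, ‖gradient φ (x k)‖ ≤ b * ‖x (k + 1) - x k‖)
    (xbar : EuclideanSpace ℝ (Fin n))
    (hacc : ∃ σ : ℕ → ℕ, StrictMono σ ∧
      Tendsto (fun j => x (σ j)) atTop (𝓝 xbar))
    (q : ℝ) (hq : q ∈ Set.Ioo (1/2 : ℝ) 1)
    (M : ℝ) (hM : 0 < M)
    (hPLK : ∃ ε η : ℝ, 0 < ε ∧ 0 < η ∧
      ∀ y, ‖y - xbar‖ < ε → φ xbar < φ y → φ y < φ xbar + η →
        (1 / (M * (1 - q))) * (φ y - φ xbar) ^ q ≤ ‖gradient φ y‖) :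
    ∃ σ' > (0 : ℝ), ∃ K : ℕ, ∀ k ≥ K,
      ‖x k - xbar‖ ≤ σ' * (k : ℝ) ^ (-((1 - q) / (2 * q - 1))) := by
  obtain ⟨σ, hσ, hlim⟩ := hacc
  obtain ⟨hq_half, hq_one⟩ := hq
  obtain ⟨ε, η, hε, hη, hPLK⟩ := hPLK
  have h1q : 0 < 1 - q := by linarith
  set r : ℕ → ℝ := fun k => φ (x k) - φ xbar
  have hrσ : Tendsto (fun j => r (σ j)) atTop (𝓝 0) := by
    simpa using ((hφ.continuous.tendsto xbar).comp hlim).sub_const (φ xbar)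
  have hgrad : ∀ k, dist (x k) xbar < ε → 0 < r k → r k < η →
      r k ^ q ≤ M * (1 - q) * b * dist (x (k + 1)) (x k) := by
    intro k hball hpos hη'
    have h := (hPLK (x k) (by rwa [← dist_eq_norm]) (by linarith) (by linarith)).trans (hH3 k)
    rw [one_div, inv_mul_le_iff₀ (by positivity), ← dist_eq_norm] at h
    linarith
  have hdec : ∀ k, a * dist (x (k + 1)) (x k) ^ 2 ≤ r k - r (k + 1) := fun k => by
    rw [dist_eq_norm]; linarith [hH1 k]
  have hr := (antitone_of_mul_sq_le_sub ha.le hdec).le_of_tendsto_comp_strictMono hσ hrσ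
  obtain ⟨K, hK⟩ := exists_dist_le_mul_rpow_of_descent (by linarith) hq_one ha
    (by positivity : 0 < M * (1 - q) * b) hε hη hσ hlim hrσ hr hdec hgrad
  obtain ⟨D, hD, hdecay⟩ := exists_rpow_le_mul_rpow_neg_of_le_sub_mul_rpow (by linarith)
    (by linarith) (by positivity) h1q hr (fun k hk => (hK k hk).2)
  refine ⟨M * (1 - q) * b / (a * (1 - q)) * D, by positivity, 2 * K + 1, fun k hk => ?_⟩
  rw [← dist_eq_norm, mul_assoc]
  calc dist (x k) xbar ≤ M * (1 - q) * b / (a * (1 - q)) * r k ^ (1 - q) :=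
        (hK k (by omega)).1
    _ ≤ _ := by gcongr; exact hdecay k hk

theorem iterate_sublinear_high_exponent_H3
    (n : ℕ) (φ : EuclideanSpace ℝ (Fin n) → ℝ)
    (hφ : ContDiff ℝ 1 φ)
    (hbdd : ∃ m : ℝ, ∀ x, m ≤ φ x)
    (a b : ℝ) (ha : 0 < a) (hb : 0 < b)
    (x : ℕ → EuclideanSpace ℝ (Fin n))
    (hH1 : ∀ k : ℕ, φ (x (k + 1)) + a * ‖x (k + 1) - x k‖ ^ 2 ≤ φ (x k))
    (hH3 : ∀ k : ℕ, ‖gradient φ (x k)‖ ≤ b * ‖x (k + 1) - x k‖)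
    (xbar : EuclideanSpace ℝ (Fin n))
    (hacc : ∃ σ : ℕ → ℕ, StrictMono σ ∧
      Tendsto (fun j => x (σ j)) atTop (𝓝 xbar))
    (q : ℝ) (hq : q ∈ Set.Ioo (1/2 : ℝ) 1)
    (M : ℝ) (hM : 0 < M)
    (hPLK : ∃ ε η : ℝ, 0 < ε ∧ 0 < η ∧
      ∀ y, ‖y - xbar‖ < ε → φ xbar < φ y → φ y < φ xbar + η →
        (1 / (M * (1 - q))) * (φ y - φ xbar) ^ q ≤ ‖gradient φ y‖) :
    ∃ σ' > (0 : ℝ), ∃ K : ℕ, ∀ k ≥ K,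
      ‖x k - xbar‖ ≤ σ' * (k : ℝ) ^ (-((1 - q) / (2 * q - 1))) :=
  iterate_sublinear_high_exponent_H3_general n φ hφ a b ha hb x hH1 hH3 xbar hacc q hq M hM hPLK
end

section
/- Let φ : ℝⁿ → ℝ be continuously differentiable and bounded from below, let a, b > 0, let (x^k) satisfy the sufficient-decrease condition (H1) and the modified relative-error condition (H3), let x̄ be an accumulation point of (x^k), and assume additionally that x^{k+1} ≠ x^k for all k ∈ ℕ. Then for every q ∈ (0, 1/2) the exponent PLK condition of φ at x̄ with exponent q fails: for every M > 0, ε > 0, and η > 0 there exists x with ‖x − x̄‖ < ε and φ(x̄) < φ(x) < φ(x̄) + η such that ‖∇φ(x)‖ < (1/(M(1−q))) · (φ(x) − φ(x̄))^q. -/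
open Filter Topology

/-- Inconsistency of the lower-exponent PLK condition with (H1) and (H3)
when all iterates are distinct (Theorem 4.2). -/
theorem lower_exponent_PLK_inconsistent_H1_H3
    (n : ℕ) (φ : EuclideanSpace ℝ (Fin n) → ℝ)
    (hφ : ContDiff ℝ 1 φ)
    (hbdd : ∃ m : ℝ, ∀ x, m ≤ φ x)
    (a b : ℝ) (ha : 0 < a) (hb : 0 < b)
    (x : ℕ → EuclideanSpace ℝ (Fin n))
    (hH1 : ∀ k : ℕ, φ (x (k + 1)) + a * ‖x (k + 1) - x k‖ ^ 2 ≤ φ (x k))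
    (hH3 : ∀ k : ℕ, ‖gradient φ (x k)‖ ≤ b * ‖x (k + 1) - x k‖)
    (xbar : EuclideanSpace ℝ (Fin n))
    (hacc : ∃ σ : ℕ → ℕ, StrictMono σ ∧
      Tendsto (fun j => x (σ j)) atTop (𝓝 xbar))
    (hne : ∀ k : ℕ, x (k + 1) ≠ x k) :
    ∀ q ∈ Set.Ioo (0 : ℝ) (1/2), ∀ M > (0 : ℝ), ∀ ε > (0 : ℝ), ∀ η > (0 : ℝ),
      ∃ y, ‖y - xbar‖ < ε ∧ φ xbar < φ y ∧ φ y < φ xbar + η ∧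
        ‖gradient φ y‖ < (1 / (M * (1 - q))) * (φ y - φ xbar) ^ q := by
  obtain ⟨σ, hσ, hσtend⟩ := hacc
  intro q hq M hM ε hε η hη
  have hq0 : (0:ℝ) < q := hq.1
  have hq2 : q < 1/2 := hq.2
  have h1q : (0:ℝ) < 1 - 2*q := by linarith
  set c : ℝ := 1 / (M * (1 - q)) with hc
  have hc0 : 0 < c := by
    apply div_pos one_pos
    apply mul_pos hM
    linarith
  -- strict decrease of φ along the sequence
  have hdec : ∀ k, φ (x (k+1)) < φ (x k) := by
    intro k
    have h := hH1 k
    have hn : (0:ℝ) < ‖x (k+1) - x k‖ := by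
      rw [norm_pos_iff]
      exact sub_ne_zero.2 (hne k)
    have hp : 0 < a * ‖x (k+1) - x k‖ ^ 2 := mul_pos ha (pow_pos hn 2)
    linarith
  have hanti : StrictAnti (fun k => φ (x k)) := strictAnti_nat_of_succ_lt hdec
  have hcont : Continuous φ := hφ.continuous
  have hφtend : Tendsto (fun j => φ (x (σ j))) atTop (𝓝 (φ xbar)) :=
    (hcont.tendsto xbar).comp hσtend
  have hge : ∀ k, φ xbar ≤ φ (x k) := by
    intro k
    apply le_of_tendsto hφtend
    filter_upwards [eventually_ge_atTop k] with j hj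
    exact hanti.antitone (hj.trans (hσ.id_le j))
  have hgt : ∀ k, φ xbar < φ (x k) := fun k => lt_of_le_of_lt (hge (k+1)) (hdec k)
  set δ : ℝ := (a * c^2 / b^2) ^ (1/(1 - 2*q)) with hδdef
  have hK : (0:ℝ) < a * c^2 / b^2 := by positivity
  have hδ : 0 < δ := Real.rpow_pos_of_pos hK _
  -- choose a large index j
  have hsmall : ∀ᶠ j in atTop, φ (x (σ j)) - φ xbar < min η δ := by
    have := hφtend.sub_const (φ xbar)
    simp only [sub_self] at this
    exact this.eventually_lt_const (lt_min hη hδ)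
  have hclose : ∀ᶠ j in atTop, ‖x (σ j) - xbar‖ < ε := by
    have : Tendsto (fun j => ‖x (σ j) - xbar‖) atTop (𝓝 0) := by
      simpa using (hσtend.sub_const xbar).norm
    simpa using this.eventually_lt_const hε
  obtain ⟨j, hj1, hj2⟩ := (hsmall.and hclose).exists
  refine ⟨x (σ j), hj2, hgt _, by linarith [lt_of_lt_of_le hj1 (min_le_left η δ)], ?_⟩
  set r : ℝ := φ (x (σ j)) - φ xbar with hr
  have hr0 : 0 < r := sub_pos.2 (hgt _)
  have hrδ : r < δ := lt_of_lt_of_le hj1 (min_le_right η δ)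
  by_contra hcon
  push_neg at hcon
  -- chain of inequalities
  have h3 := hH3 (σ j)
  have h1 := hH1 (σ j)
  set d : ℝ := ‖x (σ j + 1) - x (σ j)‖ with hd
  have hd0 : 0 ≤ d := norm_nonneg _
  have hd1 : c * r ^ q ≤ b * d := le_trans hcon h3
  have hd2 : a * d^2 ≤ r := by
    have := hge (σ j + 1)
    nlinarith [h1]
  have hrq : 0 < r ^ q := Real.rpow_pos_of_pos hr0 q
  have hsq : (c * r^q)^2 ≤ (b*d)^2 :=
    pow_le_pow_left₀ (by positivity) hd1 2
  have h2q : (r^q)^2 = r^(2*q) := by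
    rw [← Real.rpow_natCast (r^q) 2, ← Real.rpow_mul hr0.le]
    norm_num; ring_nf
  -- so a*c^2*r^(2q) ≤ b^2 * r
  have hmain : a * c^2 * r^(2*q) ≤ b^2 * r := by
    have : a * ((c*r^q)^2) ≤ a * ((b*d)^2) :=
      mul_le_mul_of_nonneg_left hsq ha.le
    calc a * c^2 * r^(2*q) = a * ((c*r^q)^2) := by rw [← h2q]; ring
      _ ≤ a * ((b*d)^2) := this
      _ = b^2 * (a * d^2) := by ring
      _ ≤ b^2 * r := mul_le_mul_of_nonneg_left hd2 (by positivity)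
  -- but r < δ implies the reverse strict inequality
  have hδpow : δ ^ (1 - 2*q) = a * c^2 / b^2 := by
    rw [hδdef, ← Real.rpow_mul hK.le]
    rw [one_div, inv_mul_cancel₀ (ne_of_gt h1q), Real.rpow_one]
  have hlt : r ^ (1 - 2*q) < a * c^2 / b^2 := by
    rw [← hδpow]
    exact Real.rpow_lt_rpow hr0.le hrδ h1q
  have hsplit : r = r^(2*q) * r^(1 - 2*q) := by
    rw [← Real.rpow_add hr0]
    norm_num
  have hr2q : 0 < r^(2*q) := Real.rpow_pos_of_pos hr0 _
  have : b^2 * r < a * c^2 * r^(2*q) := by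
    calc b^2 * r = b^2 * (r^(2*q) * r^(1-2*q)) := by rw [← hsplit]
      _ < b^2 * (r^(2*q) * (a * c^2 / b^2)) := by
          apply mul_lt_mul_of_pos_left _ (by positivity)
          exact mul_lt_mul_of_pos_left hlt hr2q
      _ = a * c^2 * r^(2*q) := by field_simp
  linarith
end

section
/- Let (ψ_k) be a sequence of nonnegative real numbers, let β > 0 and q ∈ (0, 1/2), and assume ψ_{k+1} ≤ ψ_k − β·ψ_k^{2q} for all k ∈ ℕ. Then there exists k₀ ∈ ℕ such that ψ_k = 0 for all k ≥ k₀. -/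
/-- A nonnegative sequence satisfying the descent recursion with a
lower-exponent power of the current term vanishes after finitely many steps. -/
theorem finite_termination_lower_exponent_recursion
    (ψ : ℕ → ℝ) (hnonneg : ∀ k, 0 ≤ ψ k)
    (β : ℝ) (hβ : 0 < β)
    (q : ℝ) (hq : q ∈ Set.Ioo (0 : ℝ) (1/2))
    (hrec : ∀ k : ℕ, ψ (k + 1) ≤ ψ k - β * (ψ k) ^ (2 * q)) :
    ∃ k₀ : ℕ, ∀ k ≥ k₀, ψ k = 0 := by
  obtain ⟨hq0, hq2⟩ := hq
  have h2q : 0 < 2 * q := by linarith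
  have h2q1 : 2 * q < 1 := by linarith
  -- Step 1: there exists k with ψ k = 0
  have hzero : ∃ k, ψ k = 0 := by
    by_contra h
    push_neg at h
    have hpos : ∀ k, 0 < ψ k := fun k => lt_of_le_of_ne (hnonneg k) (Ne.symm (h k))
    set c : ℝ := β ^ ((1:ℝ) / (1 - 2*q)) with hc
    have hcpos : 0 < c := Real.rpow_pos_of_pos hβ _
    -- each ψ k ≥ c
    have hge : ∀ k, c ≤ ψ k := by
      intro k
      have h1 : 0 ≤ ψ k - β * (ψ k) ^ (2*q) :=
        le_trans (hnonneg (k+1)) (hrec k)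
      have h2 : β * (ψ k) ^ (2*q) ≤ ψ k := by linarith
      have h3 : β ≤ (ψ k) ^ (1 - 2*q) := by
        have hψ := hpos k
        have : β * (ψ k) ^ (2*q) ≤ (ψ k) ^ (1:ℝ) := by
          rwa [Real.rpow_one]
        have h4 : (ψ k) ^ (1:ℝ) = (ψ k) ^ (1 - 2*q) * (ψ k) ^ (2*q) := by
          rw [← Real.rpow_add hψ]; ring_nf
        rw [h4] at this
        have hp : 0 < (ψ k) ^ (2*q) := Real.rpow_pos_of_pos hψ _
        exact le_of_mul_le_mul_right this hp
      calc c = β ^ ((1:ℝ)/(1-2*q)) := rfl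
        _ ≤ ((ψ k) ^ (1-2*q)) ^ ((1:ℝ)/(1-2*q)) := by
            exact Real.rpow_le_rpow (le_of_lt hβ) h3
              (le_of_lt (div_pos one_pos (by linarith)))
        _ = ψ k := by
            rw [← Real.rpow_mul (hnonneg k), mul_one_div,
              div_self (by linarith : (1 - 2*q) ≠ 0), Real.rpow_one]
    -- linear decrease
    have hdec : ∀ n : ℕ, ψ n ≤ ψ 0 - n * (β * c ^ (2*q)) := by
      intro n
      induction n with
      | zero => simp
      | succ n ih =>
        have hck : c ^ (2*q) ≤ (ψ n) ^ (2*q) :=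
          Real.rpow_le_rpow (le_of_lt hcpos) (hge n) (le_of_lt h2q)
        have := hrec n
        have : ψ (n+1) ≤ ψ n - β * c ^ (2*q) := by nlinarith
        push_cast
        linarith
    obtain ⟨n, hn⟩ := exists_nat_gt (ψ 0 / (β * c ^ (2*q)))
    have hbc : 0 < β * c ^ (2*q) := by positivity
    have := hdec n
    have : ψ 0 < n * (β * c ^ (2*q)) := by
      rwa [div_lt_iff₀ hbc] at hn
    have := hnonneg n
    linarith [hdec n]
  -- Step 2: once zero, stays zero
  obtain ⟨k₀, hk₀⟩ := hzero
  refine ⟨k₀, fun k hk => ?_⟩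
  induction k with
  | zero =>
    have : k₀ = 0 := Nat.le_zero.mp hk
    rw [← this]; exact hk₀
  | succ n ih =>
    rcases Nat.lt_or_ge k₀ (n+1) with hlt | hge
    · have hn : ψ n = 0 := ih (Nat.lt_succ_iff.mp hlt)
      have := hrec n
      rw [hn] at this
      have h0 : (0:ℝ) ^ (2*q) = 0 := Real.zero_rpow (ne_of_gt h2q)
      rw [h0] at this
      simp at this
      exact le_antisymm this (hnonneg (n+1))
    · have : k₀ = n+1 := le_antisymm hk hge
      rw [← this]; exact hk₀
end

section
/- Let (ψ_k) be a monotonically decreasing sequence of positive real numbers converging to 0, let β > 0 and q ∈ (1/2, 1), and assume ψ_k − ψ_{k+1} ≥ β·ψ_{k+1}^{2q} for all k ∈ ℕ. Then there exist η > 0 and K ∈ ℕ such that ψ_k ≤ η · k^{−1/(2q−1)} for all k ≥ K. -/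
/-!
Put `α = 2q - 1`. With `t = β ψ_{k+1}^α` the recursion reads `ψ_k ≥ ψ_{k+1} (1 + t)`, hence
`ψ_{k+1}^{-α} - ψ_k^{-α} ≥ ψ_{k+1}^{-α} (1 - (1 + t)^{-α}) = β · ((1 + t)^α - 1) / t · (1 + t)^{-α}`.
Both factors decrease in `t`, the first by concavity of `x ↦ x^α`, and `t ≤ β ψ_0^α` since `ψ`
decreases. So `ψ_k^{-α}` grows at least linearly in `k`, i.e. `ψ_k = O(k^{-1/α})`.
-/

theorem rpow_neg_add_le_rpow_neg {α β T a b : ℝ} (hα₀ : 0 < α) (hα₁ : α ≤ 1) (hβ : 0 < β)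
    (ha : 0 < a) (haT : β * a ^ α ≤ T) (hab : a + β * a ^ (1 + α) ≤ b) :
    b ^ (-α) + β * (((1 + T) ^ α - 1) / T * (1 + T) ^ (-α)) ≤ a ^ (-α) := by
  set t := β * a ^ α with ht_def
  have ht : 0 < t := by positivity
  have hb : a * (1 + t) ≤ b := by
    rw [Real.rpow_add ha, Real.rpow_one] at hab
    linarith
  have hb_rpow : b ^ (-α) ≤ a ^ (-α) * (1 + t) ^ (-α) := by
    rw [← Real.mul_rpow ha.le (by positivity)]
    exact Real.rpow_le_rpow_of_nonpos (by positivity) hb (by linarith)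
  have hat : a ^ (-α) * t = β := by
    rw [ht_def, mul_left_comm, ← Real.rpow_add ha, neg_add_cancel, Real.rpow_zero, mul_one]
  have hslope : ((1 + T) ^ α - 1) / T ≤ ((1 + t) ^ α - 1) / t := by
    have hanti := (Real.concaveOn_rpow hα₀.le hα₁).antitoneOn_slope_gt (Set.mem_Ici.2 zero_le_one)
    have h := hanti ⟨Set.mem_Ici.2 (by linarith), (by linarith : (1 : ℝ) < 1 + t)⟩
      ⟨Set.mem_Ici.2 (by linarith), (by linarith : (1 : ℝ) < 1 + T)⟩ (by linarith)
    simpa [slope_def_field] using h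
  have hslope_nonneg : 0 ≤ ((1 + T) ^ α - 1) / T := by
    have : 1 ≤ (1 + T) ^ α := Real.one_le_rpow (by linarith) hα₀.le
    exact div_nonneg (by linarith) (by linarith)
  have hpow : (1 + T) ^ (-α) ≤ (1 + t) ^ (-α) :=
    Real.rpow_le_rpow_of_nonpos (by positivity) (by linarith) (by linarith)
  have hsplit : 1 - (1 + t) ^ (-α) = ((1 + t) ^ α - 1) * (1 + t) ^ (-α) := by
    rw [sub_mul, ← Real.rpow_add (by positivity), add_neg_cancel, Real.rpow_zero, one_mul]
  calc b ^ (-α) + β * (((1 + T) ^ α - 1) / T * (1 + T) ^ (-α))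
      ≤ b ^ (-α) + β * (((1 + t) ^ α - 1) / t * (1 + t) ^ (-α)) := by
        have := hslope_nonneg.trans hslope
        have := Real.rpow_nonneg (by linarith : (0 : ℝ) ≤ 1 + T) (-α)
        gcongr
    _ = b ^ (-α) + a ^ (-α) * (1 - (1 + t) ^ (-α)) := by
        rw [hsplit, ← hat]; field_simp
    _ ≤ a ^ (-α) := by linarith

theorem add_mul_le_of_add_le_succ {u : ℕ → ℝ} {c : ℝ} (h : ∀ k, u k + c ≤ u (k + 1)) (k : ℕ) :
    u 0 + k * c ≤ u k := by
  induction k with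
  | zero => simp
  | succ k ih => push_cast; linarith [h k]

theorem le_rpow_neg_inv_of_le_rpow_neg {x y α : ℝ} (hx : 0 < x) (hy : 0 < y) (hα : 0 < α)
    (h : y ≤ x ^ (-α)) : x ≤ y ^ (-(1 / α)) := by
  rwa [one_div, neg_inv, Real.le_rpow_inv_iff_of_neg hx hy (by linarith)]

open Filter Topology

theorem sublinear_rate_high_exponent_recursion_general
    (ψ : ℕ → ℝ) (hpos : ∀ k, 0 < ψ k)
    (β : ℝ) (hβ : 0 < β)
    (q : ℝ) (hq : q ∈ Set.Ioo (1/2 : ℝ) 1)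
    (hrec : ∀ k : ℕ, ψ k - ψ (k + 1) ≥ β * (ψ (k + 1)) ^ (2 * q)) :
    ∃ η > (0 : ℝ), ∃ K : ℕ, ∀ k ≥ K, ψ k ≤ η * (k : ℝ) ^ (-(1 / (2 * q - 1))) := by
  set α := 2 * q - 1
  have hα₀ : 0 < α := by linarith [hq.1]
  have hα₁ : α ≤ 1 := by linarith [hq.2]
  have hanti : Antitone ψ := antitone_nat_of_succ_le fun k ↦ by
    linarith [hrec k, mul_nonneg hβ.le (Real.rpow_nonneg (hpos (k + 1)).le (2 * q))]
  set T := β * ψ 0 ^ α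
  have hT : 0 < T := mul_pos hβ (Real.rpow_pos_of_pos (hpos 0) α)
  set c := β * (((1 + T) ^ α - 1) / T * (1 + T) ^ (-α))
  have hc : 0 < c := by
    have : 1 < (1 + T) ^ α := Real.one_lt_rpow (by linarith) hα₀
    exact mul_pos hβ (mul_pos (div_pos (by linarith) hT) (by positivity))
  have hstep (k : ℕ) : ψ k ^ (-α) + c ≤ ψ (k + 1) ^ (-α) := by
    refine rpow_neg_add_le_rpow_neg hα₀ hα₁ hβ (hpos _) ?_ ?_
    · exact mul_le_mul_of_nonneg_left
        (Real.rpow_le_rpow (hpos _).le (hanti (Nat.zero_le _)) hα₀.le) hβ.le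
    · rw [show 1 + α = 2 * q by ring]; linarith [hrec k]
  refine ⟨c ^ (-(1 / α)), by positivity, 1, fun k hk ↦ ?_⟩
  have hk : (0 : ℝ) < k := by exact_mod_cast hk
  rw [← Real.mul_rpow hc.le hk.le]
  refine le_rpow_neg_inv_of_le_rpow_neg (hpos k) (by positivity) hα₀ ?_
  linarith [add_mul_le_of_add_le_succ hstep k, Real.rpow_pos_of_pos (hpos 0) (-α)]

/-- The abstract sequence argument behind the sublinear rate in
Theorem 3.3(iv). -/
theorem sublinear_rate_high_exponent_recursion
    (ψ : ℕ → ℝ) (hpos : ∀ k, 0 < ψ k)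
    (hdec : ∀ k, ψ (k + 1) ≤ ψ k)
    (hconv : Tendsto ψ atTop (𝓝 0))
    (β : ℝ) (hβ : 0 < β)
    (q : ℝ) (hq : q ∈ Set.Ioo (1/2 : ℝ) 1)
    (hrec : ∀ k : ℕ, ψ k - ψ (k + 1) ≥ β * (ψ (k + 1)) ^ (2 * q)) :
    ∃ η > (0 : ℝ), ∃ K : ℕ, ∀ k ≥ K, ψ k ≤ η * (k : ℝ) ^ (-(1 / (2 * q - 1))) :=
  sublinear_rate_high_exponent_recursion_general ψ hpos β hβ q hq hrec
end

section
/- Let g : ℝⁿ → ℝ be differentiable, let h : ℝⁿ → ℝ be convex, and set φ := g − h. Fix x₀ ∈ ℝⁿ and let 𝓛(x₀) denote the connected component containing x₀ of the sublevel set {x ∈ ℝⁿ : φ(x) ≤ φ(x₀)}. Assume the gradient ∇g is Lipschitz with constant L > 0 on 𝓛(x₀), and let x̄ ∈ 𝓛(x₀) satisfy φ(x) ≥ φ(x̄) for all x ∈ 𝓛(x₀). Let v₁ be a subgradient of h at x₀ that maximizes ‖∇g(x₀) − v‖ over all subgradients v of h at x₀, set σ₁ := ‖∇g(x₀) − v₁‖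 and d := ∇g(x₀) − v₁. Then for every α ∈ [0, 1/L]: φ(x₀) − φ(x̄) ≥ φ(x₀) − φ(x₀ − α·d) ≥ (α(2 − αL)/2)·σ₁². -/
/-!
Because `v₁` is a subgradient of `h` at `x₀`, the function `ψ z = g z - h x₀ - ⟪v₁, z - x₀⟫`
majorizes `φ` and agrees with it at `x₀`; its gradient at `x₀` is `d`, so `x₀ - α • d` is a
gradient step for `ψ`. The usual descent lemma needs `∇ψ = ∇g - v₁` to be Lipschitz along the
whole step, but this is only known on the sublevel component. A continuous induction along the
ray handles this: while `ψ` stays below `ψ x₀` on `[0, t)`, that piece of the ray is a connected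
subset of the sublevel set through `x₀`, so the descent bound holds at `t`, and it is strict
for `0 < t ≤ 1 / L`. The sublevel component of `ψ` lies in that of `φ`, which gives both
inequalities.
-/

open RealInnerProductSpace

open Set Filter Topology

theorem ContinuousOn.forall_le_left_of_forall_Ico_le_imp_lt {f : ℝ → ℝ} {a b : ℝ}
    (hf : ContinuousOn f (Icc a b)) (hstart : ∀ᶠ s in 𝓝[>] a, f s < f a)
    (hstep : ∀ t ∈ Ioc a b, (∀ s ∈ Ico a t, f s ≤ f a) → f t < f a) :
    ∀ t ∈ Icc a b, f t ≤ f a := by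
  by_contra! hexceed
  set U := {t ∈ Icc a b | f a < f t}
  have hbdd : BddBelow U := ⟨a, fun t ht => ht.1.1⟩
  set τ := sInf U
  have hτ : τ ∈ Icc a b ∧ f a ≤ f τ := by
    have hclosed : IsClosed (Icc a b ∩ f ⁻¹' Ici (f a)) :=
      hf.preimage_isClosed_of_isClosed isClosed_Icc isClosed_Ici
    exact hclosed.closure_subset_iff.2 (fun t ht => ⟨ht.1, ht.2.le⟩)
      (csInf_mem_closure hexceed hbdd)
  have hbelow : ∀ s ∈ Ico a τ, f s ≤ f a := fun s hs =>
    not_lt.1 fun h => hs.2.not_ge (csInf_le hbdd ⟨⟨hs.1, hs.2.le.trans hτ.1.2⟩, h⟩)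
  rcases hτ.1.1.eq_or_lt with hτa | hτa
  · obtain ⟨c, hac, hc⟩ := mem_nhdsGT_iff_exists_Ioo_subset.1 hstart
    have hcτ : c ≤ τ := le_csInf hexceed fun t ht => not_lt.1 fun htc =>
      (hc ⟨ht.1.1.lt_of_ne (by rintro rfl; exact ht.2.false), htc⟩).not_gt ht.2
    linarith [mem_Ioi.1 hac]
  · exact (hstep τ ⟨hτa, hτ.1.2⟩ hbelow).not_ge hτ.2

theorem sub_smul_mem_connectedComponentIn {E : Type*} [NormedAddCommGroup E] [NormedSpace ℝ E]
    {U : Set E} {x d : E} {S : Set ℝ} (hS : IsPreconnected S) (h0 : 0 ∈ S)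
    (hSU : ∀ s ∈ S, x - s • d ∈ U) : ∀ s ∈ S, x - s • d ∈ connectedComponentIn U x := by
  have hγ : Continuous fun s : ℝ => x - s • d := by fun_prop
  have hsub : (fun s : ℝ => x - s • d) '' S ⊆ connectedComponentIn U x :=
    (hS.image _ hγ.continuousOn).subset_connectedComponentIn ⟨0, h0, by simp⟩
      (image_subset_iff.2 hSU)
  exact fun s hs => hsub ⟨s, hs, rfl⟩

theorem HasDerivAt.eventually_nhdsGT_lt_of_neg {f : ℝ → ℝ} {f' a : ℝ} (hf : HasDerivAt f f' a)
    (hf' : f' < 0) : ∀ᶠ s in 𝓝[>] a, f s < f a := by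
  filter_upwards [hf.hasDerivWithinAt.limsup_slope_le' (lt_irrefl a) hf', self_mem_nhdsWithin]
    with s hslope has
  rw [slope_def_field, div_neg_iff] at hslope
  rcases hslope with h | h
  · linarith [h.1, h.2, mem_Ioi.1 has]
  · linarith [h.1]

section GradientStep

variable {E : Type*} [NormedAddCommGroup E] [InnerProductSpace ℝ E] [CompleteSpace E]
  {f : E → ℝ} {f' : E → E}

theorem HasGradientAt.hasDerivAt_sub_smul {x d y : E} {s : ℝ}
    (hf : HasGradientAt f y (x - s • d)) :
    HasDerivAt (fun u : ℝ => f (x - u • d)) (-⟪y, d⟫) s := by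
  have hγ : HasDerivAt (fun u : ℝ => x - u • d) (-d) s := by
    simpa using ((hasDerivAt_id s).smul_const d).const_sub x
  simpa [Function.comp_def, inner_neg_right] using
    (hasGradientAt_iff_hasFDerivAt.1 hf).comp_hasDerivAt s hγ

theorem HasGradientAt.sub_const_sub_inner {v w x₀ y : E} (c : ℝ) (hf : HasGradientAt f w y) :
    HasGradientAt (fun z => f z - c - ⟪v, z - x₀⟫) (w - v) y := by
  rw [hasGradientAt_iff_hasFDerivAt] at hf ⊢
  have hv : HasFDerivAt (fun z => ⟪v, z - x₀⟫) (InnerProductSpace.toDual ℝ E v) y :=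
    ((InnerProductSpace.toDual ℝ E v).hasFDerivAt.comp y
      ((hasFDerivAt_id y).sub_const x₀)).congr_fderiv (ContinuousLinearMap.comp_id _)
  rw [map_sub]
  exact (hf.sub_const c).sub hv

theorem apply_sub_smul_le_of_lipschitzOn (hf : ∀ y, HasGradientAt f (f' y) y) {C : Set E}
    {L t : ℝ} {x d : E} (hLip : ∀ y ∈ C, ∀ z ∈ C, ‖f' y - f' z‖ ≤ L * ‖y - z‖)
    (ht : 0 ≤ t) (hseg : ∀ s ∈ Ico 0 t, x - s • d ∈ C) :
    f (x - t • d) ≤ f x - t * ⟪f' x, d⟫ + L * t ^ 2 / 2 * ‖d‖ ^ 2 := by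
  have hF (s : ℝ) : HasDerivAt (fun u : ℝ => f (x - u • d)) (-⟪f' (x - s • d), d⟫) s :=
    (hf _).hasDerivAt_sub_smul
  have hB (s : ℝ) : HasDerivAt (fun u : ℝ => f x - u * ⟪f' x, d⟫ + L * u ^ 2 / 2 * ‖d‖ ^ 2)
      (-⟪f' x, d⟫ + L * s * ‖d‖ ^ 2) s :=
    ((((hasDerivAt_id s).mul_const ⟪f' x, d⟫).const_sub (f x)).add
      ((((hasDerivAt_pow 2 s).const_mul L).div_const 2).mul_const (‖d‖ ^ 2))).congr_deriv
      (by push_cast; ring)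
  have hslope (s : ℝ) (hs : s ∈ Ico 0 t) :
      -⟪f' (x - s • d), d⟫ ≤ -⟪f' x, d⟫ + L * s * ‖d‖ ^ 2 := by
    have hx : x ∈ C := by simpa using hseg 0 ⟨le_rfl, hs.1.trans_lt hs.2⟩
    calc -⟪f' (x - s • d), d⟫ = -⟪f' x, d⟫ + ⟪f' x - f' (x - s • d), d⟫ := by
          rw [inner_sub_left]; ring
      _ ≤ -⟪f' x, d⟫ + ‖f' x - f' (x - s • d)‖ * ‖d‖ := by
          gcongr; exact real_inner_le_norm _ _
      _ ≤ -⟪f' x, d⟫ + L * ‖x - (x - s • d)‖ * ‖d‖ := by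
          gcongr; exact hLip _ hx _ (hseg s hs)
      _ = -⟪f' x, d⟫ + L * s * ‖d‖ ^ 2 := by
          rw [sub_sub_cancel, norm_smul, Real.norm_of_nonneg hs.1]; ring
  exact image_le_of_deriv_right_le_deriv_boundary
    (fun s _ => (hF s).continuousAt.continuousWithinAt) (fun s _ => (hF s).hasDerivWithinAt)
    (by simp) (fun s _ => (hB s).continuousAt.continuousWithinAt)
    (fun s _ => (hB s).hasDerivWithinAt) hslope ⟨ht, le_rfl⟩

theorem sub_smul_mem_connectedComponentIn_and_le_of_lipschitzOn
    (hf : ∀ y, HasGradientAt f (f' y) y) {x₀ : E} {L : ℝ} (hL : 0 < L)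
    (hLip : ∀ y ∈ connectedComponentIn {z | f z ≤ f x₀} x₀,
      ∀ z ∈ connectedComponentIn {z | f z ≤ f x₀} x₀, ‖f' y - f' z‖ ≤ L * ‖y - z‖)
    {α : ℝ} (hα : α ∈ Icc 0 (1 / L)) :
    x₀ - α • f' x₀ ∈ connectedComponentIn {z | f z ≤ f x₀} x₀ ∧
      f (x₀ - α • f' x₀) ≤ f x₀ - α * (2 - α * L) / 2 * ‖f' x₀‖ ^ 2 := by
  set d := f' x₀
  set F : ℝ → ℝ := fun s => f (x₀ - s • d)
  have hF0 : F 0 = f x₀ := by simp [F]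
  have hdescent (t : ℝ) (ht : 0 ≤ t) (hbelow : ∀ s ∈ Ico 0 t, F s ≤ f x₀) :
      F t ≤ f x₀ - t * (2 - t * L) / 2 * ‖d‖ ^ 2 := by
    have hseg (s : ℝ) (hs : s ∈ Ico 0 t) := sub_smul_mem_connectedComponentIn
      (U := {z | f z ≤ f x₀}) isPreconnected_Ico ⟨le_rfl, hs.1.trans_lt hs.2⟩ hbelow s hs
    have := apply_sub_smul_le_of_lipschitzOn hf hLip ht hseg
    rw [real_inner_self_eq_norm_sq] at this
    linarith
  have hle : ∀ t ∈ Icc 0 (1 / L), F t ≤ f x₀ := by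
    rcases eq_or_ne d 0 with hd | hd
    · simp [F, hd]
    rw [← hF0]
    have hFderiv (s : ℝ) : HasDerivAt F (-⟪f' (x₀ - s • d), d⟫) s := (hf _).hasDerivAt_sub_smul
    have hFc : Continuous F := continuous_iff_continuousAt.2 fun s => (hFderiv s).continuousAt
    refine hFc.continuousOn.forall_le_left_of_forall_Ico_le_imp_lt ?_ ?_
    · refine (hFderiv 0).eventually_nhdsGT_lt_of_neg ?_
      rw [zero_smul, sub_zero, neg_lt_zero]
      exact real_inner_self_pos.2 hd
    · intro t ht hlt
      have htL : t * L ≤ 1 := (le_div_iff₀ hL).1 ht.2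
      have hmargin : 0 < t * (2 - t * L) / 2 * ‖d‖ ^ 2 :=
        mul_pos (div_pos (mul_pos ht.1 (by linarith)) two_pos) (pow_pos (norm_pos_iff.2 hd) 2)
      rw [hF0] at hlt ⊢
      linarith [hdescent t ht.1.le hlt]
  exact ⟨sub_smul_mem_connectedComponentIn isPreconnected_Icc ⟨le_rfl, hα.1⟩
    (fun s hs => hle s ⟨hs.1, hs.2.trans hα.2⟩) α ⟨hα.1, le_rfl⟩,
    hdescent α hα.1 fun s hs => hle s ⟨hs.1, hs.2.le.trans hα.2⟩⟩

end GradientStep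

theorem distance_estimate_from_global_minimum_general
    (n : ℕ) (g h : EuclideanSpace ℝ (Fin n) → ℝ)
    (hg : Differentiable ℝ g)
    (φ : EuclideanSpace ℝ (Fin n) → ℝ) (hφ : φ = fun z => g z - h z)
    (x₀ : EuclideanSpace ℝ (Fin n))
    (L : ℝ) (hL : 0 < L)
    (hLip : ∀ y ∈ connectedComponentIn {z | φ z ≤ φ x₀} x₀,
      ∀ z ∈ connectedComponentIn {z | φ z ≤ φ x₀} x₀,
        ‖gradient g y - gradient g z‖ ≤ L * ‖y - z‖)
    (xbar : EuclideanSpace ℝ (Fin n))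
    (hmin : ∀ y ∈ connectedComponentIn {z | φ z ≤ φ x₀} x₀, φ xbar ≤ φ y)
    (v₁ : EuclideanSpace ℝ (Fin n))
    (hv₁ : ∀ y, h x₀ + ⟪v₁, y - x₀⟫ ≤ h y) :
    ∀ α ∈ Set.Icc (0 : ℝ) (1 / L),
      φ x₀ - φ (x₀ - α • (gradient g x₀ - v₁)) ≤ φ x₀ - φ xbar ∧
      (α * (2 - α * L) / 2) * ‖gradient g x₀ - v₁‖ ^ 2 ≤
        φ x₀ - φ (x₀ - α • (gradient g x₀ - v₁)) := by
  intro α hα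
  set ψ := fun z => g z - h x₀ - ⟪v₁, z - x₀⟫
  have hφψ (z : EuclideanSpace ℝ (Fin n)) : φ z ≤ ψ z := by
    have := hv₁ z
    simp only [hφ, ψ]
    linarith
  have hψx₀ : ψ x₀ = φ x₀ := by simp [ψ, hφ]
  have hcomp : connectedComponentIn {z | ψ z ≤ ψ x₀} x₀ ⊆
      connectedComponentIn {z | φ z ≤ φ x₀} x₀ :=
    connectedComponentIn_mono x₀ fun z hz => (hφψ z).trans (hψx₀ ▸ hz)
  obtain ⟨hmem, hdescent⟩ := sub_smul_mem_connectedComponentIn_and_le_of_lipschitzOn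
    (f' := fun z => gradient g z - v₁) (fun z => (hg z).hasGradientAt.sub_const_sub_inner (h x₀))
    hL (fun y hy z hz => by simpa using hLip y (hcomp hy) z (hcomp hz)) hα
  exact ⟨by linarith [hmin _ (hcomp hmem)],
    by linarith [hφψ (x₀ - α • (gradient g x₀ - v₁))]⟩

/-- Distance estimate from the global minimum over a level-set component
(Lemma 6.1). -/
theorem distance_estimate_from_global_minimum
    (n : ℕ) (g h : EuclideanSpace ℝ (Fin n) → ℝ)
    (hg : Differentiable ℝ g)
    (hh : ConvexOn ℝ Set.univ h)
    (φ : EuclideanSpace ℝ (Fin n) → ℝ) (hφ : φ = fun z => g z - h z)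
    (x₀ : EuclideanSpace ℝ (Fin n))
    (L : ℝ) (hL : 0 < L)
    (hLip : ∀ y ∈ connectedComponentIn {z | φ z ≤ φ x₀} x₀,
      ∀ z ∈ connectedComponentIn {z | φ z ≤ φ x₀} x₀,
        ‖gradient g y - gradient g z‖ ≤ L * ‖y - z‖)
    (xbar : EuclideanSpace ℝ (Fin n))
    (hxbar : xbar ∈ connectedComponentIn {z | φ z ≤ φ x₀} x₀)
    (hmin : ∀ y ∈ connectedComponentIn {z | φ z ≤ φ x₀} x₀, φ xbar ≤ φ y)
    (v₁ : EuclideanSpace ℝ (Fin n))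
    (hv₁ : ∀ y, h x₀ + ⟪v₁, y - x₀⟫ ≤ h y)
    (hmax : ∀ v : EuclideanSpace ℝ (Fin n),
      (∀ y, h x₀ + ⟪v, y - x₀⟫ ≤ h y) →
        ‖gradient g x₀ - v‖ ≤ ‖gradient g x₀ - v₁‖) :
    ∀ α ∈ Set.Icc (0 : ℝ) (1 / L),
      φ x₀ - φ (x₀ - α • (gradient g x₀ - v₁)) ≤ φ x₀ - φ xbar ∧
      (α * (2 - α * L) / 2) * ‖gradient g x₀ - v₁‖ ^ 2 ≤
        φ x₀ - φ (x₀ - α • (gradient g x₀ - v₁)) :=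
  distance_estimate_from_global_minimum_general n g h hg φ hφ x₀ L hL hLip xbar hmin v₁ hv₁
end

section
/- Let φ : ℝⁿ → ℝ be differentiable, let r > 0, and suppose ∇φ is Lipschitz with constant L > 0 on the open ball B(x̄, r) and that φ(x) ≥ φ(x̄) for all x ∈ B(x̄, r) (so x̄ is a local minimizer). Let q ∈ (0, 1/2) and M > 0, and assume the lower-exponent PL inequality ‖∇φ(x)‖ ≥ M·(φ(x) − φ(x̄))^q holds for all x ∈ B(x̄, r) with φ(x) > φ(x̄). Then φ is constant near x̄: there exists r' ∈ (0, r] such that φ(x) = φ(x̄) for all x ∈ B(x̄, r'). In particular, for a function of class C^{1,1} that is not locally constant at one of its local minimizers, the exponent PLK condition with any lower exponent q ∈ (0, 1/2) fails at that minimizer. -/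
/-- The smooth instance of Theorem 6.2: a C^{1,1} function satisfying the
lower-exponent PL inequality at a local minimizer must be locally constant
there. -/
theorem lower_exponent_PL_implies_locally_constant
    (n : ℕ) (φ : EuclideanSpace ℝ (Fin n) → ℝ)
    (hφ : Differentiable ℝ φ)
    (xbar : EuclideanSpace ℝ (Fin n)) (r : ℝ) (hr : 0 < r)
    (L : ℝ) (hL : 0 < L)
    (hLip : ∀ y ∈ Metric.ball xbar r, ∀ z ∈ Metric.ball xbar r,
      ‖gradient φ y - gradient φ z‖ ≤ L * ‖y - z‖)
    (hmin : ∀ y ∈ Metric.ball xbar r, φ xbar ≤ φ y)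
    (q : ℝ) (hq : q ∈ Set.Ioo (0 : ℝ) (1/2))
    (M : ℝ) (hM : 0 < M)
    (hPL : ∀ y ∈ Metric.ball xbar r, φ xbar < φ y →
      M * (φ y - φ xbar) ^ q ≤ ‖gradient φ y‖) :
    ∃ r' : ℝ, 0 < r' ∧ r' ≤ r ∧
      ∀ y ∈ Metric.ball xbar r', φ y = φ xbar := by
  obtain ⟨hq0, hq2⟩ := hq
  have hxbar : xbar ∈ Metric.ball xbar r := Metric.mem_ball_self hr
  -- gradient vanishes at the local minimizer
  have hgrad0 : gradient φ xbar = 0 := by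
    have hlm : IsLocalMin φ xbar := by
      filter_upwards [Metric.ball_mem_nhds xbar hr] using hmin
    rw [gradient, hlm.fderiv_eq_zero, map_zero]
  have h12q : 0 < 1 - 2 * q := by linarith
  set c : ℝ := (M ^ 2 / (4 * L)) ^ (1 / (1 - 2 * q)) with hc
  have hc0 : 0 < c := Real.rpow_pos_of_pos (by positivity) _
  obtain ⟨δ, hδ0, hδ⟩ := Metric.continuousAt_iff.mp hφ.continuous.continuousAt c hc0
  refine ⟨min δ (r / 2), lt_min hδ0 (by positivity), (min_le_right _ _).trans (by linarith), ?_⟩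
  intro y hy
  have hyδ : dist y xbar < δ := lt_of_lt_of_le hy (min_le_left _ _)
  have hyr2 : dist y xbar < r / 2 := lt_of_lt_of_le hy (min_le_right _ _)
  have hymem : y ∈ Metric.ball xbar r := by
    rw [Metric.mem_ball] at *; linarith
  by_contra hne
  set t : ℝ := φ y - φ xbar with ht
  have ht0 : 0 < t := by
    have := hmin y hymem
    rcases lt_or_eq_of_le this with h | h
    · simpa [ht] using sub_pos.mpr h
    · exact absurd h.symm hne
  have htc : t < c := by
    have := hδ hyδ
    rwa [Real.dist_eq, abs_of_pos ht0] at this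
  set g : EuclideanSpace ℝ (Fin n) := gradient φ y with hg
  -- gradient bound at y
  have hgy : ‖g‖ ≤ L * ‖y - xbar‖ := by
    have := hLip y hymem xbar hxbar
    rwa [hgrad0, sub_zero] at this
  have hnorm_y : ‖y - xbar‖ < r / 2 := by rwa [← dist_eq_norm]
  set v : EuclideanSpace ℝ (Fin n) := y - (1 / (2 * L)) • g with hv
  have hvy : v - y = -((1 / (2 * L)) • g) := by rw [hv]; abel
  have hnvy : ‖v - y‖ = (1 / (2 * L)) * ‖g‖ := by
    rw [hvy, norm_neg, norm_smul, Real.norm_eq_abs, abs_of_pos (by positivity)]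
  have hnvy' : ‖v - y‖ ≤ ‖y - xbar‖ / 2 := by
    rw [hnvy]
    calc (1 / (2 * L)) * ‖g‖ ≤ (1 / (2 * L)) * (L * ‖y - xbar‖) := by
          apply mul_le_mul_of_nonneg_left hgy (by positivity)
      _ = ‖y - xbar‖ / 2 := by field_simp
  have hvmem : v ∈ Metric.ball xbar r := by
    rw [Metric.mem_ball, dist_eq_norm]
    calc ‖v - xbar‖ = ‖(v - y) + (y - xbar)‖ := by rw [sub_add_sub_cancel]
      _ ≤ ‖v - y‖ + ‖y - xbar‖ := norm_add_le _ _
      _ ≤ ‖y - xbar‖ / 2 + ‖y - xbar‖ := by linarith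
      _ < r := by linarith
  -- segment from y to v lies in the ball
  have hseg : segment ℝ y v ⊆ Metric.ball xbar r :=
    (convex_ball xbar r).segment_subset hymem hvmem
  -- descent lemma via the mean value inequality
  have hkey : ‖φ v - φ y - (fderiv ℝ φ y) (v - y)‖ ≤ (L * ‖v - y‖) * ‖v - y‖ := by
    refine Convex.norm_image_sub_le_of_norm_hasFDerivWithin_le'
      (s := segment ℝ y v) (f' := fun z => fderiv ℝ φ z)
      (fun z _ => (hφ z).hasFDerivAt.hasFDerivWithinAt) ?_ (convex_segment y v)
      (left_mem_segment ℝ y v) (right_mem_segment ℝ y v)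
    intro z hz
    have hzy : ‖z - y‖ ≤ ‖v - y‖ := by
      have : z ∈ Metric.closedBall y (dist v y) :=
        (convex_closedBall y (dist v y)).segment_subset
          (Metric.mem_closedBall_self dist_nonneg) (Metric.mem_closedBall.2 le_rfl) hz
      rw [Metric.mem_closedBall, dist_eq_norm] at this
      rwa [dist_eq_norm] at this
    have heq : ‖fderiv ℝ φ z - fderiv ℝ φ y‖ = ‖gradient φ z - gradient φ y‖ := by
      rw [gradient, gradient, ← map_sub, LinearIsometryEquiv.norm_map]
    rw [heq]
    calc ‖gradient φ z - gradient φ y‖ ≤ L * ‖z - y‖ := hLip z (hseg hz) y hymem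
      _ ≤ L * ‖v - y‖ := mul_le_mul_of_nonneg_left hzy hL.le
  have hfder : (fderiv ℝ φ y) (v - y) = -((1 / (2 * L)) * ‖g‖ ^ 2) := by
    have h1 : fderiv ℝ φ y = (InnerProductSpace.toDual ℝ (EuclideanSpace ℝ (Fin n))) g := by
      rw [hg, gradient, LinearIsometryEquiv.apply_symm_apply]
    rw [h1, InnerProductSpace.toDual_apply_apply, hvy, inner_neg_right, inner_smul_right,
      real_inner_self_eq_norm_sq]
  -- descent: ‖g‖² ≤ 4 L t
  have hdescent : ‖g‖ ^ 2 ≤ 4 * L * t := by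
    have h2 : φ v - φ y + (1 / (2 * L)) * ‖g‖ ^ 2 ≤ (L * ‖v - y‖) * ‖v - y‖ := by
      have := (le_abs_self _).trans hkey
      rwa [hfder, sub_neg_eq_add] at this
    have h3 : (L * ‖v - y‖) * ‖v - y‖ = (1 / (4 * L)) * ‖g‖ ^ 2 := by
      rw [hnvy]; field_simp; ring
    have h4 : φ xbar ≤ φ v := hmin v hvmem
    rw [h3] at h2
    have hL' : (0:ℝ) < 4 * L := by positivity
    have : (1 / (2 * L)) * ‖g‖ ^ 2 - (1 / (4 * L)) * ‖g‖ ^ 2 ≤ t := by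
      rw [ht]; linarith
    have h5 : (1 / (2 * L)) * ‖g‖ ^ 2 - (1 / (4 * L)) * ‖g‖ ^ 2
        = (1 / (4 * L)) * ‖g‖ ^ 2 := by field_simp; ring
    rw [h5] at this
    calc ‖g‖ ^ 2 = (4 * L) * ((1 / (4 * L)) * ‖g‖ ^ 2) := by
          rw [← mul_assoc, mul_one_div, div_self hL'.ne', one_mul]
      _ ≤ (4 * L) * t := mul_le_mul_of_nonneg_left this hL'.le
  -- PL inequality
  have hpl : M * t ^ q ≤ ‖g‖ := hPL y hymem (by linarith [ht0] : φ xbar < φ y)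
  have htq : 0 < t ^ q := Real.rpow_pos_of_pos ht0 q
  have hsq : M ^ 2 * t ^ (2 * q) ≤ 4 * L * t := by
    have h6 : (M * t ^ q) ^ 2 ≤ ‖g‖ ^ 2 := pow_le_pow_left₀ (by positivity) hpl 2
    have h7 : (M * t ^ q) ^ 2 = M ^ 2 * t ^ (2 * q) := by
      rw [mul_pow, ← Real.rpow_natCast (t ^ q) 2, ← Real.rpow_mul ht0.le]
      norm_num [mul_comm]
    linarith [h7 ▸ h6, hdescent]
  -- derive M² / (4L) ≤ t ^ (1 - 2q)
  have h8 : t ^ (2 * q) * t ^ (1 - 2 * q) = t := by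
    rw [← Real.rpow_add ht0]; norm_num
  have htq2 : 0 < t ^ (2 * q) := Real.rpow_pos_of_pos ht0 _
  have hlow : M ^ 2 ≤ 4 * L * t ^ (1 - 2 * q) := by
    refine le_of_mul_le_mul_right ?_ htq2
    calc M ^ 2 * t ^ (2 * q) ≤ 4 * L * t := hsq
      _ = 4 * L * t ^ (1 - 2 * q) * t ^ (2 * q) := by
          conv_rhs => rw [mul_assoc, mul_comm (t ^ (1 - 2 * q)), h8]
  have hdiv : M ^ 2 / (4 * L) ≤ t ^ (1 - 2 * q) :=
    (div_le_iff₀ (by positivity)).mpr (by linarith)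
  -- conclude t ≥ c
  have hfinal : c ≤ t := by
    have h10 : c ≤ (t ^ (1 - 2 * q)) ^ (1 / (1 - 2 * q)) :=
      Real.rpow_le_rpow (by positivity) hdiv (by positivity)
    rwa [← Real.rpow_mul ht0.le, mul_one_div, div_self h12q.ne', Real.rpow_one] at h10
  linarith
end
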